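/- arXiv:1606.05863 — 5 statements merged into one kernel-verified Lean document; each statement's English description precedes it below -/
import Mathlib

section
/- Let A be an invertible linear map on ℝ², and let v, w be nonzero vectors in ℝ². Then (1/(‖A‖·‖A⁻¹‖)) · |sin ∠(v,w)| ≤ |sin ∠(Av, Aw)| ≤ ‖A‖·‖A⁻¹‖ · |sin ∠(v,w)|, where ∠(u,u') denotes the angle between u and u' and ‖·‖ is the operator norm. -/
/-!
A linear map multiplies the area form by its determinant, so
`sin ∠(Av, Aw) = |det A| |ω(v, w)| / (‖Av‖ ‖Aw‖)`. Evaluating `ω(Ax, AJx)` for the quarter-turn `Jx`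
of `x` gives `|det A| ‖x‖² ≤ ‖Ax‖ ‖A‖ ‖x‖`, i.e. `|det A| ‖v‖ ≤ ‖A‖ ‖Av‖`; together with
`‖w‖ ≤ ‖A⁻¹‖ ‖Aw‖` this is the upper bound. The lower bound is the upper bound for `A⁻¹`.
-/

noncomputable abbrev E2 := EuclideanSpace ℝ (Fin 2)

/-- `|sin ∠(v,w)| = |det(v,w)| / (‖v‖·‖w‖)` for vectors in ℝ². -/
noncomputable def sinAngle (v w : E2) : ℝ :=
  |v 0 * w 1 - v 1 * w 0| / (‖v‖ * ‖w‖)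

open Module

section TwoDim

variable {E : Type*} [NormedAddCommGroup E] [InnerProductSpace ℝ E] [Fact (finrank ℝ E = 2)]

namespace Orientation

variable (o : Orientation ℝ E (Fin 2))

theorem areaForm_map_linearMap (f : E →ₗ[ℝ] E) (x y : E) :
    o.areaForm (f x) (f y) = LinearMap.det f * o.areaForm x y := by
  have hfv : ![f x, f y] = f ∘ ![x, y] := by
    ext i; fin_cases i <;> rfl
  rw [areaForm_to_volumeForm, areaForm_to_volumeForm, hfv,
    o.volumeForm_robust _ (o.finOrthonormalBasis_orientation two_pos Fact.out), Basis.det_comp]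

end Orientation

attribute [local instance] FiniteDimensional.of_fact_finrank_eq_two

theorem ContinuousLinearMap.abs_det_mul_norm_le (f : E →L[ℝ] E) (x : E) :
    |LinearMap.det (f : E →ₗ[ℝ] E)| * ‖x‖ ≤ ‖f‖ * ‖f x‖ := by
  rcases eq_or_ne x 0 with rfl | hx
  · simp
  let o : Orientation ℝ E (Fin 2) := (finBasisOfFinrankEq ℝ E Fact.out).orientation
  let J := o.rightAngleRotation
  -- `x` and its quarter-turn `J x` span a square of area `‖x‖²`
  have harea : o.areaForm (f x) (f (J x)) = LinearMap.det (f : E →ₗ[ℝ] E) * ‖x‖ ^ 2 := by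
    rw [← real_inner_self_eq_norm_sq, ← o.areaForm_rightAngleRotation_right]
    exact o.areaForm_map_linearMap (f : E →ₗ[ℝ] E) x (J x)
  refine le_of_mul_le_mul_right ?_ (norm_pos_iff.mpr hx)
  calc |LinearMap.det (f : E →ₗ[ℝ] E)| * ‖x‖ * ‖x‖ = |o.areaForm (f x) (f (J x))| := by
        rw [harea, abs_mul, abs_of_nonneg (sq_nonneg ‖x‖)]; ring
    _ ≤ ‖f x‖ * ‖f (J x)‖ := o.abs_areaForm_le _ _
    _ ≤ ‖f x‖ * (‖f‖ * ‖J x‖) := by gcongr; exact f.le_opNorm _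
    _ = ‖f‖ * ‖f x‖ * ‖x‖ := by rw [LinearIsometryEquiv.norm_map]; ring

theorem Orientation.abs_areaForm_map_div_le (o : Orientation ℝ E (Fin 2)) (A : E ≃L[ℝ] E)
    (v w : E) :
    |o.areaForm (A v) (A w)| / (‖A v‖ * ‖A w‖)
      ≤ ‖(A : E →L[ℝ] E)‖ * ‖(A.symm : E →L[ℝ] E)‖ * (|o.areaForm v w| / (‖v‖ * ‖w‖)) := by
  rcases eq_or_ne v 0 with rfl | hv
  · simp
  rcases eq_or_ne w 0 with rfl | hw
  · simp
  have hdet : |LinearMap.det (A : E →ₗ[ℝ] E)| * ‖v‖ ≤ ‖(A : E →L[ℝ] E)‖ * ‖A v‖ :=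
    (A : E →L[ℝ] E).abs_det_mul_norm_le v
  have hsymm : ‖w‖ ≤ ‖(A.symm : E →L[ℝ] E)‖ * ‖A w‖ := by
    simpa using (A.symm : E →L[ℝ] E).le_opNorm (A w)
  have hmap : o.areaForm (A v) (A w) = LinearMap.det (A : E →ₗ[ℝ] E) * o.areaForm v w :=
    o.areaForm_map_linearMap (A : E →ₗ[ℝ] E) v w
  have hAv : 0 < ‖A v‖ := norm_pos_iff.mpr (A.map_ne_zero_iff.mpr hv)
  have hAw : 0 < ‖A w‖ := norm_pos_iff.mpr (A.map_ne_zero_iff.mpr hw)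
  rw [hmap, abs_mul, ← mul_div_assoc,
    div_le_div_iff₀ (mul_pos hAv hAw) (mul_pos (norm_pos_iff.mpr hv) (norm_pos_iff.mpr hw))]
  calc |LinearMap.det (A : E →ₗ[ℝ] E)| * |o.areaForm v w| * (‖v‖ * ‖w‖)
      = |o.areaForm v w| * ((|LinearMap.det (A : E →ₗ[ℝ] E)| * ‖v‖) * ‖w‖) := by ring
    _ ≤ |o.areaForm v w| * ((‖(A : E →L[ℝ] E)‖ * ‖A v‖) * (‖(A.symm : E →L[ℝ] E)‖ * ‖A w‖)) := by
      gcongr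
    _ = _ := by ring

end TwoDim

instance fact_finrank_E2 : Fact (finrank ℝ E2 = 2) := ⟨finrank_euclideanSpace_fin⟩

theorem sinAngle_eq_abs_areaForm_div (v w : E2) :
    sinAngle v w = |(EuclideanSpace.basisFun (Fin 2) ℝ).toBasis.orientation.areaForm v w|
      / (‖v‖ * ‖w‖) := by
  rw [Orientation.areaForm_to_volumeForm, Orientation.volumeForm_robust _ _ rfl, Basis.det_apply,
    Matrix.det_fin_two, sinAngle]
  simp only [Basis.toMatrix_apply, OrthonormalBasis.coe_toBasis_repr_apply,
    EuclideanSpace.basisFun_repr, Matrix.cons_val_zero, Matrix.cons_val_one]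
  ring_nf

theorem sinAngle_map_le (A : E2 ≃L[ℝ] E2) (v w : E2) :
    sinAngle (A v) (A w) ≤ ‖(A : E2 →L[ℝ] E2)‖ * ‖(A.symm : E2 →L[ℝ] E2)‖ * sinAngle v w := by
  simpa only [sinAngle_eq_abs_areaForm_div] using Orientation.abs_areaForm_map_div_le _ A v w

theorem stmt0_general (A : E2 ≃L[ℝ] E2) (v w : E2) :
    (1 / (‖(A : E2 →L[ℝ] E2)‖ * ‖(A.symm : E2 →L[ℝ] E2)‖)) * sinAngle v w
        ≤ sinAngle (A v) (A w) ∧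
      sinAngle (A v) (A w)
        ≤ ‖(A : E2 →L[ℝ] E2)‖ * ‖(A.symm : E2 →L[ℝ] E2)‖ * sinAngle v w := by
  refine ⟨?_, sinAngle_map_le A v w⟩
  have h := sinAngle_map_le A.symm (A v) (A w)
  rw [A.symm_apply_apply, A.symm_apply_apply, A.symm_symm,
    mul_comm ‖(A.symm : E2 →L[ℝ] E2)‖] at h
  rwa [one_div, inv_mul_le_iff₀ (mul_pos A.norm_pos A.norm_symm_pos)]

theorem stmt0 (A : E2 ≃L[ℝ] E2) (v w : E2) (hv : v ≠ 0) (hw : w ≠ 0) :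
    (1 / (‖(A : E2 →L[ℝ] E2)‖ * ‖(A.symm : E2 →L[ℝ] E2)‖)) * sinAngle v w
        ≤ sinAngle (A v) (A w) ∧
      sinAngle (A v) (A w)
        ≤ ‖(A : E2 →L[ℝ] E2)‖ * ‖(A.symm : E2 →L[ℝ] E2)‖ * sinAngle v w :=
  stmt0_general A v w
end

section
/- Let (c_n)_{n∈ℤ} be a sequence of positive reals such that lim_{n→±∞} (1/|n|) log c_n = 0, let ε > 0, and define q := δ · inf{e^{ε|n|} c_n : n ∈ ℤ} for some constant δ ∈ (0,1). Then the infimum is attained and positive, q ≤ δ c_0, and if q' := δ · inf{e^{ε|n|} c_{n+1} : n ∈ ℤ} then e^{−ε} q ≤ q' ≤ e^{ε} q. -/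
/-!
Temperedness gives `log c n ≥ -(ε/2)|n|` for large `|n|`, so `e^{ε|n|} c n ≥ e^{ε|n|/2} → ∞`
along the cofinite filter of `ℤ`; such a function attains its infimum, which is then positive
and at most the value `c 0` at `n = 0`. Since `| |n+1| - |n| | ≤ 1`, the weights `e^{ε|n|}` and
`e^{ε|n+1|}` differ by a factor of at most `e^ε`, which compares the two infima.
-/

open Filter Real Set Topology

theorem tendsto_exp_mul_mul_atTop_of_tendsto_log_div {u : ℕ → ℝ} (hu : ∀ n, 0 < u n)
    (hlog : Tendsto (fun n : ℕ => log (u n) / n) atTop (𝓝 0)) {ε : ℝ} (hε : 0 < ε) :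
    Tendsto (fun n : ℕ => exp (ε * n) * u n) atTop atTop := by
  have hexp : Tendsto (fun n : ℕ => exp (ε / 2 * n)) atTop atTop :=
    tendsto_exp_atTop.comp (tendsto_natCast_atTop_atTop.const_mul_atTop (half_pos hε))
  refine tendsto_atTop_mono' atTop ?_ hexp
  filter_upwards [hlog.eventually (eventually_gt_nhds (neg_lt_zero.2 (half_pos hε))),
    eventually_gt_atTop 0] with n hn hn0
  have hpos : (0 : ℝ) < n := Nat.cast_pos.2 hn0
  have : -(ε / 2) * n < log (u n) := (lt_div_iff₀ hpos).1 hn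
  rw [← exp_log (hu n), ← exp_add]
  exact exp_le_exp.2 (by linarith)

theorem Int.tendsto_cofinite_of_tendsto_natCast {α : Type*} {f : ℤ → α} {l : Filter α}
    (hpos : Tendsto (fun n : ℕ => f n) atTop l) (hneg : Tendsto (fun n : ℕ => f (-n)) atTop l) :
    Tendsto f cofinite l := by
  rw [Int.cofinite_eq, tendsto_sup, ← tendsto_comp_neg_atTop_iff, ← Nat.map_cast_int_atTop,
    tendsto_map'_iff, tendsto_map'_iff]
  exact ⟨hneg, hpos⟩

theorem Real.exp_mul_abs_le_exp_mul {ε : ℝ} (hε : 0 ≤ ε) {x y : ℝ} (hxy : |x - y| ≤ 1) :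
    exp (ε * |x|) ≤ exp ε * exp (ε * |y|) := by
  rw [← exp_add]
  refine exp_le_exp.2 ?_
  have : |x| ≤ 1 + |y| := by
    have := abs_sub_abs_le_abs_sub x y
    linarith
  nlinarith

theorem ciInf_le_mul_ciInf_of_forall_exists_le_mul {ι κ : Type*} [Nonempty ι] {f : ι → ℝ}
    {g : κ → ℝ} (hg : BddBelow (range g)) {a : ℝ} (ha : 0 < a) (h : ∀ i, ∃ j, g j ≤ a * f i) :
    ⨅ j, g j ≤ a * ⨅ i, f i := by
  rw [← div_le_iff₀' ha]
  refine le_ciInf fun i => ?_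
  obtain ⟨j, hj⟩ := h i
  rw [div_le_iff₀' ha]
  exact (ciInf_le hg j).trans hj

theorem stmt6 (c : ℤ → ℝ) (hc : ∀ n, 0 < c n)
    (htempPos : Tendsto (fun n : ℕ => Real.log (c n) / (n : ℝ)) atTop (nhds 0))
    (htempNeg : Tendsto (fun n : ℕ => Real.log (c (-n)) / (n : ℝ)) atTop (nhds 0))
    (ε δ : ℝ) (hε : 0 < ε) (hδ : δ ∈ Set.Ioo (0 : ℝ) 1) :
    (∃ n₀ : ℤ, sInf (Set.range fun n : ℤ => Real.exp (ε * |(n : ℝ)|) * c n)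
        = Real.exp (ε * |(n₀ : ℝ)|) * c n₀) ∧
      0 < sInf (Set.range fun n : ℤ => Real.exp (ε * |(n : ℝ)|) * c n) ∧
      δ * sInf (Set.range fun n : ℤ => Real.exp (ε * |(n : ℝ)|) * c n) ≤ δ * c 0 ∧
      Real.exp (-ε) * (δ * sInf (Set.range fun n : ℤ => Real.exp (ε * |(n : ℝ)|) * c n))
        ≤ δ * sInf (Set.range fun n : ℤ => Real.exp (ε * |(n : ℝ)|) * c (n + 1)) ∧
      δ * sInf (Set.range fun n : ℤ => Real.exp (ε * |(n : ℝ)|) * c (n + 1))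
        ≤ Real.exp ε * (δ * sInf (Set.range fun n : ℤ => Real.exp (ε * |(n : ℝ)|) * c n)) := by
  obtain ⟨hδ, -⟩ := hδ
  set g : ℤ → ℝ := fun n => exp (ε * |(n : ℝ)|) * c n
  set g' : ℤ → ℝ := fun n => exp (ε * |(n : ℝ)|) * c (n + 1)
  have hweight : ∀ m n : ℤ, |m - n| ≤ 1 → ∀ x, 0 < x →
      exp (ε * |(m : ℝ)|) * x ≤ exp ε * (exp (ε * |(n : ℝ)|) * x) := fun m n hmn x hx => by
    rw [← mul_assoc]
    exact mul_le_mul_of_nonneg_right (exp_mul_abs_le_exp_mul hε.le (by exact_mod_cast hmn)) hx.le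
  have hg_tendsto : Tendsto g cofinite atTop := by
    refine Int.tendsto_cofinite_of_tendsto_natCast ?_ ?_
    · simpa [g] using tendsto_exp_mul_mul_atTop_of_tendsto_log_div (fun n => hc n) htempPos hε
    · simpa [g] using tendsto_exp_mul_mul_atTop_of_tendsto_log_div (fun n => hc (-n)) htempNeg hε
  obtain ⟨n₀, hn₀⟩ := hg_tendsto.exists_forall_le
  have hmin : sInf (range g) = g n₀ := IsLeast.csInf_eq ⟨mem_range_self n₀, forall_mem_range.2 hn₀⟩
  have hg_bdd : BddBelow (range g) := ⟨g n₀, forall_mem_range.2 hn₀⟩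
  have hg'_bdd : BddBelow (range g') :=
    ⟨0, forall_mem_range.2 fun n => (mul_pos (exp_pos _) (hc _)).le⟩
  refine ⟨⟨n₀, hmin⟩, hmin ▸ mul_pos (exp_pos _) (hc n₀), ?_, ?_, ?_⟩
  · gcongr
    simpa [g] using csInf_le hg_bdd (mem_range_self 0)
  · rw [mul_left_comm]
    gcongr
    rw [exp_neg, inv_mul_le_iff₀ (exp_pos ε)]
    exact ciInf_le_mul_ciInf_of_forall_exists_le_mul hg_bdd (exp_pos ε) fun n =>
      ⟨n + 1, hweight _ _ (by simp) _ (hc _)⟩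
  · rw [mul_left_comm]
    gcongr
    exact ciInf_le_mul_ciInf_of_forall_exists_le_mul hg'_bdd (exp_pos ε) fun n =>
      ⟨n - 1, by simpa [g'] using hweight (n - 1) n (by simp) _ (hc n)⟩
end

section
/- Suppose R is a 2×2 rotation matrix and v₁ = (1,0) + e₁, v₂ = R·(1,0) + e₂ are nonzero vectors with v₁ proportional to v₂ (v₁ = t·v₂ for some t ≠ 0), where ‖e₁‖, ‖e₂‖ ≤ η for some η < 1/10. Then R = ±Id + E where every entry of E has absolute value at most C·η for some absolute constant C. -/
/-! Parallel vectors have vanishing cross product. With `v₁ = (1 + f, g)` and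
`v₂ = (cos θ + p, sin θ + q)` this reads `(1 + f) (sin θ + q) = g (cos θ + p)`, and since `1 + f`
is bounded away from `0` it forces `|sin θ| ≤ 3η`. Then `|cos θ|` is within `sin² θ` of `1`,
so `R` is within `O(η)` of `±Id`, the sign being that of `cos θ`. -/

lemma abs_le_of_sqrt_sq_add_sq_le {a b η : ℝ} (h : √(a ^ 2 + b ^ 2) ≤ η) : |a| ≤ η ∧ |b| ≤ η :=
  ⟨(Real.abs_le_sqrt (by nlinarith)).trans h, (Real.abs_le_sqrt (by nlinarith)).trans h⟩

lemma mul_eq_mul_of_eq_smul {v w : Fin 2 → ℝ} {t : ℝ} (h : v = t • w) :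
    v 0 * w 1 = v 1 * w 0 := by
  subst h; simp only [Pi.smul_apply, smul_eq_mul]; ring

lemma abs_le_three_mul_of_perturbed_cross_eq {c s f g p q η : ℝ} (hη : η < 1 / 10)
    (hcs : c ^ 2 + s ^ 2 = 1) (hf : |f| ≤ η) (hg : |g| ≤ η) (hp : |p| ≤ η) (hq : |q| ≤ η)
    (hcross : (1 + f) * (s + q) = g * (c + p)) : |s| ≤ 3 * η := by
  have hη0 : 0 ≤ η := (abs_nonneg f).trans hf
  have hc : |c| ≤ 1 := abs_le.mpr ⟨by nlinarith, by nlinarith⟩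
  have hf_ge : 1 - η ≤ |1 + f| := by
    have := abs_le.mp hf; rw [abs_of_pos (by linarith)]; linarith
  have hf_le : |1 + f| ≤ 1 + η := (abs_add_le 1 f).trans (by simp [hf])
  have hcp : |c + p| ≤ 1 + η := (abs_add_le c p).trans (by linarith)
  have hs_mul : |s| * (1 - η) ≤ 2 * η * (1 + η) := calc
    |s| * (1 - η) ≤ |s| * |1 + f| := mul_le_mul_of_nonneg_left hf_ge (abs_nonneg s)
    _ = |g * (c + p) - q * (1 + f)| := by
      rw [← abs_mul, mul_comm]; congr 1; linear_combination hcross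
    _ ≤ |g| * |c + p| + |q| * |1 + f| := by
      rw [← abs_mul, ← abs_mul]; exact abs_sub _ _
    _ ≤ η * (1 + η) + η * (1 + η) := by gcongr
    _ = 2 * η * (1 + η) := by ring
  nlinarith [abs_nonneg s]

lemma exists_sign_abs_sub_le_sq {c s : ℝ} (hcs : c ^ 2 + s ^ 2 = 1) :
    ∃ σ : ℝ, (σ = 1 ∨ σ = -1) ∧ |c - σ| ≤ s ^ 2 := by
  have hc : |c| ≤ 1 := abs_le.mpr ⟨by nlinarith, by nlinarith⟩
  have hgap : 1 - |c| ≤ s ^ 2 := by nlinarith [abs_nonneg c, sq_abs c]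
  rcases le_total 0 c with h | h
  · rw [abs_of_nonneg h] at hc hgap
    exact ⟨1, Or.inl rfl, by rw [abs_of_nonpos (by linarith)]; linarith⟩
  · rw [abs_of_nonpos h] at hc hgap
    exact ⟨-1, Or.inr rfl, by rw [abs_of_nonneg (by linarith)]; linarith⟩

theorem stmt10_general (θ η t : ℝ) (hη' : η < 1 / 10)
    (R : Matrix (Fin 2) (Fin 2) ℝ)
    (hR : R = !![Real.cos θ, -Real.sin θ; Real.sin θ, Real.cos θ])
    (e₁ e₂ v₁ v₂ : Fin 2 → ℝ)
    (he₁ : Real.sqrt (e₁ 0 ^ 2 + e₁ 1 ^ 2) ≤ η)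
    (he₂ : Real.sqrt (e₂ 0 ^ 2 + e₂ 1 ^ 2) ≤ η)
    (hv₁ : v₁ = ![1, 0] + e₁) (hv₂ : v₂ = R.mulVec ![1, 0] + e₂)
    (hprop : v₁ = t • v₂) :
    ∃ s : ℝ, (s = 1 ∨ s = -1) ∧
      ∀ i j, |R i j - s * (1 : Matrix (Fin 2) (Fin 2) ℝ) i j| ≤ 100 * η := by
  obtain ⟨hf, hg⟩ := abs_le_of_sqrt_sq_add_sq_le he₁
  obtain ⟨hp, hq⟩ := abs_le_of_sqrt_sq_add_sq_le he₂
  have hcs : Real.cos θ ^ 2 + Real.sin θ ^ 2 = 1 := Real.cos_sq_add_sin_sq θ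
  have hcross := mul_eq_mul_of_eq_smul hprop
  rw [show v₁ 0 = 1 + e₁ 0 by simp [hv₁, Matrix.vecHead],
    show v₁ 1 = e₁ 1 by simp [hv₁, Matrix.vecHead, Matrix.vecTail],
    show v₂ 0 = Real.cos θ + e₂ 0 by simp [hv₂, hR],
    show v₂ 1 = Real.sin θ + e₂ 1 by simp [hv₂, hR]] at hcross
  have hsin : |Real.sin θ| ≤ 3 * η :=
    abs_le_three_mul_of_perturbed_cross_eq hη' hcs hf hg hp hq hcross
  obtain ⟨σ, hσ, hcos⟩ := exists_sign_abs_sub_le_sq hcs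
  have hη0 : 0 ≤ η := (abs_nonneg _).trans hf
  have hcos' : |Real.cos θ - σ| ≤ 100 * η := calc
    |Real.cos θ - σ| ≤ |Real.sin θ| ^ 2 := (sq_abs (Real.sin θ)).symm ▸ hcos
    _ ≤ (3 * η) ^ 2 := by gcongr
    _ ≤ 100 * η := by nlinarith
  have hsin' : |Real.sin θ| ≤ 100 * η := by linarith
  refine ⟨σ, hσ, fun i j => ?_⟩
  fin_cases i <;> fin_cases j <;> simp [hR, hcos', hsin']

theorem stmt10 (θ η t : ℝ) (hη : 0 < η) (hη' : η < 1 / 10) (ht : t ≠ 0)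
    (R : Matrix (Fin 2) (Fin 2) ℝ)
    (hR : R = !![Real.cos θ, -Real.sin θ; Real.sin θ, Real.cos θ])
    (e₁ e₂ v₁ v₂ : Fin 2 → ℝ)
    (he₁ : Real.sqrt (e₁ 0 ^ 2 + e₁ 1 ^ 2) ≤ η)
    (he₂ : Real.sqrt (e₂ 0 ^ 2 + e₂ 1 ^ 2) ≤ η)
    (hv₁ : v₁ = ![1, 0] + e₁) (hv₂ : v₂ = R.mulVec ![1, 0] + e₂)
    (hv₁0 : v₁ ≠ 0) (hv₂0 : v₂ ≠ 0)
    (hprop : v₁ = t • v₂) :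
    ∃ s : ℝ, (s = 1 ∨ s = -1) ∧
      ∀ i j, |R i j - s * (1 : Matrix (Fin 2) (Fin 2) ℝ) i j| ≤ 100 * η :=
  stmt10_general θ η t hη' R hR e₁ e₂ v₁ v₂ he₁ he₂ hv₁ hv₂ hprop
end

section
/- Let a, c > 0, β ∈ (0,1), χ > 0, and let L : ℝ² → ℝ² be linear with ‖L‖ ≤ K. Suppose g = Θ ∘ F where F : U → ℝ² satisfies F(0)=0, ‖dF‖₀ ≤ K, ‖dF_v − dF_w‖ ≤ ε‖v−w‖^{β/2}, and Θ satisfies ‖Θ − Id‖_{C⁰} ≤ δ, ‖d(Θ − Id)‖₀ ≤ δ, ‖dΘ_v − dΘ_w‖ ≤ δ‖v−w‖^{β/2} on F(U). Then for all v,w ∈ U with ‖v−w‖ ≤ D: ‖dg_v − dg_w‖ ≤ (δ K^{1+β/2} + ε(K+δ+1) D^{β/6})·‖v−w‖^{β/3}. -/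
theorem ContinuousLinearMap.norm_comp_sub_comp_le {𝕜 E F G : Type*} [NontriviallyNormedField 𝕜]
    [SeminormedAddCommGroup E] [NormedSpace 𝕜 E] [SeminormedAddCommGroup F] [NormedSpace 𝕜 F]
    [SeminormedAddCommGroup G] [NormedSpace 𝕜 G] (A A' : F →L[𝕜] G) (B B' : E →L[𝕜] F) :
    ‖A.comp B - A'.comp B'‖ ≤ ‖A - A'‖ * ‖B‖ + ‖A'‖ * ‖B - B'‖ := by
  have hsplit : A.comp B - A'.comp B' = (A - A').comp B + A'.comp (B - B') := by
    rw [ContinuousLinearMap.sub_comp, ContinuousLinearMap.comp_sub]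
    abel
  rw [hsplit]
  exact (norm_add_le _ _).trans
    (add_le_add (opNorm_comp_le _ _) (opNorm_comp_le _ _))

theorem Real.rpow_add_le_mul_rpow {t D p q : ℝ} (ht : 0 ≤ t) (htD : t ≤ D) (hp : 0 ≤ p)
    (hq : 0 < q) : t ^ (p + q) ≤ D ^ p * t ^ q := by
  rw [Real.rpow_add' ht (by positivity)]
  gcongr

section CompositionHolder

variable {E F G : Type*} [NormedAddCommGroup E] [NormedSpace ℝ E]
  [NormedAddCommGroup F] [NormedSpace ℝ F] [NormedAddCommGroup G] [NormedSpace ℝ G]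

theorem norm_comp_sub_comp_le_of_holder {s : Set E} (hs : Convex ℝ s) {f : E → F}
    {Df : E → E →L[ℝ] F} {Dg : F → F →L[ℝ] G} {K M C ε α : ℝ} (hC : 0 ≤ C) (hα : 0 ≤ α)
    (hf : ∀ x ∈ s, HasFDerivAt f (Df x) x) (hDf : ∀ x ∈ s, ‖Df x‖ ≤ K)
    (hDfHol : ∀ x ∈ s, ∀ y ∈ s, ‖Df x - Df y‖ ≤ ε * ‖x - y‖ ^ α)
    (hDg : ∀ y ∈ f '' s, ‖Dg y‖ ≤ M)
    (hDgHol : ∀ y ∈ f '' s, ∀ y' ∈ f '' s, ‖Dg y - Dg y'‖ ≤ C * ‖y - y'‖ ^ α)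
    {x y : E} (hx : x ∈ s) (hy : y ∈ s) :
    ‖(Dg (f x)).comp (Df x) - (Dg (f y)).comp (Df y)‖
      ≤ (C * K ^ (1 + α) + M * ε) * ‖x - y‖ ^ α := by
  have hK : 0 ≤ K := (norm_nonneg _).trans (hDf x hx)
  have hM : 0 ≤ M := (norm_nonneg _).trans (hDg _ ⟨y, hy, rfl⟩)
  have hf_lip : ‖f x - f y‖ ≤ K * ‖x - y‖ :=
    hs.norm_image_sub_le_of_norm_hasFDerivWithin_le
      (fun z hz => (hf z hz).hasFDerivWithinAt) hDf hy hx
  have hDg_comp : ‖Dg (f x) - Dg (f y)‖ ≤ C * K ^ α * ‖x - y‖ ^ α :=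
    calc ‖Dg (f x) - Dg (f y)‖ ≤ C * ‖f x - f y‖ ^ α := hDgHol _ ⟨x, hx, rfl⟩ _ ⟨y, hy, rfl⟩
      _ ≤ C * (K * ‖x - y‖) ^ α := by gcongr
      _ = C * K ^ α * ‖x - y‖ ^ α := by rw [Real.mul_rpow hK (norm_nonneg _), mul_assoc]
  calc ‖(Dg (f x)).comp (Df x) - (Dg (f y)).comp (Df y)‖
      ≤ ‖Dg (f x) - Dg (f y)‖ * ‖Df x‖ + ‖Dg (f y)‖ * ‖Df x - Df y‖ :=
        ContinuousLinearMap.norm_comp_sub_comp_le _ _ _ _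
    _ ≤ C * K ^ α * ‖x - y‖ ^ α * K + M * (ε * ‖x - y‖ ^ α) := by
        gcongr
        exacts [hDf x hx, hDg _ ⟨y, hy, rfl⟩, hDfHol x hx y hy]
    _ = (C * K ^ (1 + α) + M * ε) * ‖x - y‖ ^ α := by
        rw [Real.rpow_one_add' hK (by positivity)]
        ring

end CompositionHolder

theorem stmt12_general (ε δ β K D : ℝ)
    (hβ : β ∈ Set.Ioo (0 : ℝ) 1) (hε : 0 < ε) (hδ : 0 ≤ δ) (hK : 0 ≤ K)
    (hD1 : D ≤ 1)
    (L : E2 →L[ℝ] E2)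
    (U : Set E2) (hU : Convex ℝ U)
    (F : E2 → E2) (DF DΘ : E2 → (E2 →L[ℝ] E2))
    (hFdiff : ∀ v ∈ U, HasFDerivAt F (DF v) v)
    (hDFle : ∀ v ∈ U, ‖DF v‖ ≤ K)
    (hDFHol : ∀ v ∈ U, ∀ w ∈ U, ‖DF v - DF w‖ ≤ ε * ‖v - w‖ ^ (β / 2))
    (hDΘle : ∀ y ∈ F '' U, ‖DΘ y - ContinuousLinearMap.id ℝ E2‖ ≤ δ)
    (hDΘHol : ∀ y ∈ F '' U, ∀ y' ∈ F '' U, ‖DΘ y - DΘ y'‖ ≤ δ * ‖y - y'‖ ^ (β / 2)) :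
    ∀ v ∈ U, ∀ w ∈ U, ‖v - w‖ ≤ D →
      ‖(DΘ (F v)).comp (DF v) - (DΘ (F w)).comp (DF w)‖
        ≤ (δ * K ^ (1 + β / 2) + ε * (K + δ + 1) * D ^ (β / 6)) * ‖v - w‖ ^ (β / 3) := by
  intro v hv w hw hvwD
  obtain ⟨hβ0, -⟩ := hβ
  have hDΘ : ∀ y ∈ F '' U, ‖DΘ y‖ ≤ 1 + δ := fun y hy =>
    (norm_le_norm_add_norm_sub' _ (ContinuousLinearMap.id ℝ E2)).trans
      (add_le_add ContinuousLinearMap.norm_id_le (hDΘle y hy))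
  have hcomp := norm_comp_sub_comp_le_of_holder hU hδ (by positivity) hFdiff hDFle hDFHol hDΘ
    hDΘHol hv hw
  have hexp : β / 2 = β / 6 + β / 3 := by ring
  have hlowerD : ‖v - w‖ ^ (β / 2) ≤ D ^ (β / 6) * ‖v - w‖ ^ (β / 3) := by
    rw [hexp]
    exact Real.rpow_add_le_mul_rpow (norm_nonneg _) hvwD (by positivity) (by positivity)
  have hlower : ‖v - w‖ ^ (β / 2) ≤ ‖v - w‖ ^ (β / 3) :=
    Real.rpow_le_rpow_of_exponent_ge' (norm_nonneg _) (hvwD.trans hD1) (by positivity)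
      (by linarith)
  calc ‖(DΘ (F v)).comp (DF v) - (DΘ (F w)).comp (DF w)‖
      ≤ (δ * K ^ (1 + β / 2) + (1 + δ) * ε) * ‖v - w‖ ^ (β / 2) := hcomp
    _ = δ * K ^ (1 + β / 2) * ‖v - w‖ ^ (β / 2) + (1 + δ) * ε * ‖v - w‖ ^ (β / 2) := by ring
    _ ≤ δ * K ^ (1 + β / 2) * ‖v - w‖ ^ (β / 3)
          + (K + δ + 1) * ε * (D ^ (β / 6) * ‖v - w‖ ^ (β / 3)) := by
        gcongr ?_ + ?_ * ?_
        · exact mul_le_mul_of_nonneg_left hlower (by positivity)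
        · exact mul_le_mul_of_nonneg_right (by linarith) hε.le
    _ = (δ * K ^ (1 + β / 2) + ε * (K + δ + 1) * D ^ (β / 6)) * ‖v - w‖ ^ (β / 3) := by ring

theorem stmt12 (a c χ ε δ β K D : ℝ) (ha : 0 < a) (hc : 0 < c) (hχ : 0 < χ)
    (hβ : β ∈ Set.Ioo (0 : ℝ) 1) (hε : 0 < ε) (hδ : 0 ≤ δ) (hK : 0 ≤ K)
    (hD : 0 < D) (hD1 : D ≤ 1)
    (L : E2 →L[ℝ] E2) (hL : ‖L‖ ≤ K)
    (U : Set E2) (hU : Convex ℝ U) (h0U : (0 : E2) ∈ U)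
    (F Θ : E2 → E2) (DF DΘ : E2 → (E2 →L[ℝ] E2))
    (hF0 : F 0 = 0)
    (hFdiff : ∀ v ∈ U, HasFDerivAt F (DF v) v)
    (hDFle : ∀ v ∈ U, ‖DF v‖ ≤ K)
    (hDFHol : ∀ v ∈ U, ∀ w ∈ U, ‖DF v - DF w‖ ≤ ε * ‖v - w‖ ^ (β / 2))
    (hΘ0 : ∀ y ∈ F '' U, ‖Θ y - y‖ ≤ δ)
    (hΘdiff : ∀ y ∈ F '' U, HasFDerivAt Θ (DΘ y) y)
    (hDΘle : ∀ y ∈ F '' U, ‖DΘ y - ContinuousLinearMap.id ℝ E2‖ ≤ δ)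
    (hDΘHol : ∀ y ∈ F '' U, ∀ y' ∈ F '' U, ‖DΘ y - DΘ y'‖ ≤ δ * ‖y - y'‖ ^ (β / 2)) :
    ∀ v ∈ U, ∀ w ∈ U, ‖v - w‖ ≤ D →
      ‖(DΘ (F v)).comp (DF v) - (DΘ (F w)).comp (DF w)‖
        ≤ (δ * K ^ (1 + β / 2) + ε * (K + δ + 1) * D ^ (β / 6)) * ‖v - w‖ ^ (β / 3) :=
  stmt12_general ε δ β K D hβ hε hδ hK hD1 L U hU F DF DΘ hFdiff hDFle hDFHol hDΘle hDΘHol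
end

section
/- Let s, s' : ℝ be defined from unit-norm data by s = ‖C e₁‖⁻¹ and s' = ‖C' e₁‖⁻¹ for invertible 2×2 matrices C, C' with ‖C‖ ≤ 1, ‖C − C'‖ < η⁴, and ‖C⁻¹‖ < η⁻¹ for η ∈ (0,1). Then |s/s' − 1| < η³, and hence s/s' = e^{±2η³} provided η³ ≤ 1/2. -/
section OperatorBounds

variable {𝕜 E F : Type*} [NontriviallyNormedField 𝕜] [NormedAddCommGroup E] [NormedSpace 𝕜 E]
  [NormedAddCommGroup F] [NormedSpace 𝕜 F]

theorem ContinuousLinearEquiv.mul_norm_lt_norm_apply (C : E ≃L[𝕜] F) {η : ℝ} (hη : 0 < η)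
    (hinv : ‖(C.symm : F →L[𝕜] E)‖ < η⁻¹) {v : E} (hv : v ≠ 0) : η * ‖v‖ < ‖C v‖ := by
  have hCv : 0 < ‖C v‖ := norm_pos_iff.mpr (C.map_ne_zero_iff.mpr hv)
  have hback : ‖v‖ ≤ ‖(C.symm : F →L[𝕜] E)‖ * ‖C v‖ := by
    simpa using (C.symm : F →L[𝕜] E).le_opNorm (C v)
  have hsmall : η * ‖(C.symm : F →L[𝕜] E)‖ < 1 :=
    (mul_lt_mul_of_pos_left hinv hη).trans_eq (mul_inv_cancel₀ hη.ne')
  calc η * ‖v‖ ≤ η * ‖(C.symm : F →L[𝕜] E)‖ * ‖C v‖ := by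
        rw [mul_assoc]; exact mul_le_mul_of_nonneg_left hback hη.le
    _ < 1 * ‖C v‖ := mul_lt_mul_of_pos_right hsmall hCv
    _ = ‖C v‖ := one_mul _

theorem abs_norm_apply_sub_norm_apply_le (A B : E →L[𝕜] F) (v : E) :
    |‖B v‖ - ‖A v‖| ≤ ‖A - B‖ * ‖v‖ :=
  calc |‖B v‖ - ‖A v‖| ≤ ‖B v - A v‖ := abs_norm_sub_norm_le _ _
    _ = ‖(A - B) v‖ := by rw [norm_sub_rev]; rfl
    _ ≤ ‖A - B‖ * ‖v‖ := (A - B).le_opNorm v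

end OperatorBounds

theorem abs_div_sub_one_lt {a b ε η : ℝ} (hη : 0 ≤ η) (ha : η < a) (h : |b - a| < ε * η) :
    |b / a - 1| < ε := by
  have ha0 : 0 < a := hη.trans_lt ha
  have hε : 0 ≤ ε := by
    by_contra! hε
    linarith [abs_nonneg (b - a), mul_nonpos_of_nonpos_of_nonneg hε.le hη]
  rw [div_sub_one ha0.ne', abs_div, abs_of_pos ha0, div_lt_iff₀ ha0]
  exact h.trans_le (mul_le_mul_of_nonneg_left ha.le hε)

theorem mem_Icc_exp_of_abs_sub_one_lt {x t : ℝ} (h : |x - 1| < t) (ht : t ≤ 1 / 2) :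
    x ∈ Set.Icc (Real.exp (-(2 * t))) (Real.exp (2 * t)) := by
  obtain ⟨hlow, hhigh⟩ := abs_lt.mp h
  have ht0 : 0 < t := (abs_nonneg _).trans_lt h
  constructor
  · -- `(1 + 2t)⁻¹ ≤ 1 - t` amounts to `2t² ≤ t`, i.e. `t ≤ 1/2`
    calc Real.exp (-(2 * t)) = (Real.exp (2 * t))⁻¹ := Real.exp_neg _
      _ ≤ (1 + 2 * t)⁻¹ := by
        gcongr
        linarith [Real.add_one_le_exp (2 * t)]
      _ ≤ 1 - t := by
        rw [inv_le_iff_one_le_mul₀ (by positivity)]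
        nlinarith
      _ ≤ x := by linarith
  · calc x ≤ 1 + t := by linarith
      _ ≤ Real.exp t := by linarith [Real.add_one_le_exp t]
      _ ≤ Real.exp (2 * t) := Real.exp_le_exp.mpr (by linarith)

theorem stmt15_general (η : ℝ) (hη : η ∈ Set.Ioo (0 : ℝ) 1)
    (C C' : E2 ≃L[ℝ] E2)
    (hclose : ‖(C : E2 →L[ℝ] E2) - (C' : E2 →L[ℝ] E2)‖ < η ^ 4)
    (hinv : ‖(C.symm : E2 →L[ℝ] E2)‖ < η⁻¹)
    (s s' : ℝ)
    (hs : s = ‖C (EuclideanSpace.single (0 : Fin 2) (1 : ℝ))‖⁻¹)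
    (hs' : s' = ‖C' (EuclideanSpace.single (0 : Fin 2) (1 : ℝ))‖⁻¹) :
    |s / s' - 1| < η ^ 3 ∧
      (η ^ 3 ≤ 1 / 2 →
        Real.exp (-(2 * η ^ 3)) ≤ s / s' ∧ s / s' ≤ Real.exp (2 * η ^ 3)) := by
  set e : E2 := EuclideanSpace.single (0 : Fin 2) (1 : ℝ)
  have he : ‖e‖ = 1 := by simp [e]
  have hlower : η < ‖C e‖ := by
    have he0 : e ≠ 0 := norm_ne_zero_iff.mp (by simp [he])
    simpa [he] using C.mul_norm_lt_norm_apply hη.1 hinv he0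
  have hdiff : |‖C' e‖ - ‖C e‖| < η ^ 3 * η :=
    calc |‖C' e‖ - ‖C e‖| ≤ ‖(C : E2 →L[ℝ] E2) - (C' : E2 →L[ℝ] E2)‖ * ‖e‖ :=
          abs_norm_apply_sub_norm_apply_le (C : E2 →L[ℝ] E2) (C' : E2 →L[ℝ] E2) e
      _ < η ^ 4 := by rwa [he, mul_one]
      _ = η ^ 3 * η := by ring
  have hratio : s / s' = ‖C' e‖ / ‖C e‖ := by rw [hs, hs', inv_div_inv]
  have hkey : |s / s' - 1| < η ^ 3 := hratio ▸ abs_div_sub_one_lt hη.1.le hlower hdiff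
  exact ⟨hkey, mem_Icc_exp_of_abs_sub_one_lt hkey⟩

theorem stmt15 (η : ℝ) (hη : η ∈ Set.Ioo (0 : ℝ) 1)
    (C C' : E2 ≃L[ℝ] E2)
    (hC : ‖(C : E2 →L[ℝ] E2)‖ ≤ 1)
    (hclose : ‖(C : E2 →L[ℝ] E2) - (C' : E2 →L[ℝ] E2)‖ < η ^ 4)
    (hinv : ‖(C.symm : E2 →L[ℝ] E2)‖ < η⁻¹)
    (s s' : ℝ)
    (hs : s = ‖C (EuclideanSpace.single (0 : Fin 2) (1 : ℝ))‖⁻¹)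
    (hs' : s' = ‖C' (EuclideanSpace.single (0 : Fin 2) (1 : ℝ))‖⁻¹) :
    |s / s' - 1| < η ^ 3 ∧
      (η ^ 3 ≤ 1 / 2 →
        Real.exp (-(2 * η ^ 3)) ≤ s / s' ∧ s / s' ≤ Real.exp (2 * η ^ 3)) :=
  stmt15_general η hη C C' hclose hinv s s' hs hs'
end
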